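/- arXiv:1007.0257 — 8 statements merged into one kernel-verified Lean document; each statement's English description precedes it below -/
import Mathlib

section
/- Let m, n be positive integers with m ≥ 2, let G = C_m ⊕ C_{mn}, let {e_1, e_2} be a basis of G with ord(e_1) = m and ord(e_2) = mn, let x be an integer with gcd(x, m) = 1, and let s ∈ [1, n]. Then the sequence S = e_1^{m-1} · e_2^{sm-1} · (−x·e_1 + e_2)^{(n+1−s)m−1} has length 2m + mn − 3 (which equals η(G) − 1) and has no short zero-sum subsequence. -/
/-!
Write a subsequence as `e₁^a e₂^b g^c` with `g = -x e₁ + e₂`. Its sum is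
`(a - c x) e₁ + (b + c) e₂`, so by independence it is zero-sum iff `m ∣ a - c x` and
`mn ∣ b + c`. For a short nonempty one, `b + c` is `0` or `mn`. In the first case `m ∣ a` with
`0 < a < m`. In the second case `a = 0`, so `m ∣ c x` and hence `m ∣ c` as `x` is prime to `m`;
but `b < sm` forces `(n - s) m < c < (n + 1 - s) m`.
-/

namespace Multiset

variable {α : Type*}

theorem exists_le_le_of_le_add {u s t : Multiset α} (h : u ≤ s + t) :
    ∃ u₁ ≤ s, ∃ u₂ ≤ t, u = u₁ + u₂ := by
  classical
  exact ⟨u ∩ s, inter_le_right .., u - s, Multiset.sub_le_iff_le_add'.2 h,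
    by rw [add_comm, sub_add_inter]⟩

theorem exists_eq_of_le_replicate_add_replicate_add_replicate {T : Multiset α} {a b c : ℕ}
    {x y z : α} (h : T ≤ replicate a x + replicate b y + replicate c z) :
    ∃ a' ≤ a, ∃ b' ≤ b, ∃ c' ≤ c, T = replicate a' x + replicate b' y + replicate c' z := by
  obtain ⟨T₁₂, h₁₂, T₃, h₃, rfl⟩ := exists_le_le_of_le_add h
  obtain ⟨T₁, h₁, T₂, h₂, rfl⟩ := exists_le_le_of_le_add h₁₂
  obtain ⟨a', ha', rfl⟩ := le_replicate_iff.1 h₁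
  obtain ⟨b', hb', rfl⟩ := le_replicate_iff.1 h₂
  obtain ⟨c', hc', rfl⟩ := le_replicate_iff.1 h₃
  exact ⟨a', ha', b', hb', c', hc', rfl⟩

end Multiset

theorem addOrderOf_dvd_of_nsmul_add_nsmul_add_nsmul_eq_zero {G : Type*} [AddCommGroup G]
    {e₁ e₂ : G} (hind : ∀ a b : ℤ, a • e₁ + b • e₂ = 0 → a • e₁ = 0 ∧ b • e₂ = 0)
    {x : ℤ} {a b c : ℕ} (h : a • e₁ + b • e₂ + c • ((-x) • e₁ + e₂) = 0) :
    (addOrderOf e₁ : ℤ) ∣ a - c * x ∧ (addOrderOf e₂ : ℤ) ∣ b + c := by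
  have hsum : (a - c * x : ℤ) • e₁ + (b + c : ℤ) • e₂ = 0 := by
    rw [← h]; module
  simp only [addOrderOf_dvd_iff_zsmul_eq_zero]
  exact hind _ _ hsum

theorem add_add_eq_zero_of_dvd {m n s a b c : ℕ} {x : ℤ} (hx : Int.gcd x m = 1)
    (hs1 : 1 ≤ s) (hsn : s ≤ n) (ha : a ≤ m - 1) (hb : b ≤ s * m - 1)
    (hc : c ≤ (n + 1 - s) * m - 1) (hcard : a + b + c ≤ m * n)
    (h₁ : (m : ℤ) ∣ a - c * x) (h₂ : m * n ∣ b + c) : a + b + c = 0 := by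
  obtain rfl | hm := m.eq_zero_or_pos
  · simp only [zero_tsub, mul_zero, nonpos_iff_eq_zero] at ha hb hc
    omega
  obtain hbc | hbc_pos := (b + c).eq_zero_or_pos
  · have hma : m ∣ a := by
      rw [← Int.natCast_dvd_natCast]
      simpa [show c = 0 by omega] using h₁
    have := Nat.eq_zero_of_dvd_of_lt hma (by omega)
    omega
  · have hbc : b + c = m * n :=
      Nat.eq_of_dvd_of_lt_two_mul hbc_pos.ne' h₂ (by nlinarith [Nat.mul_pos hm (by omega : 0 < n)])
    have hmc : m ∣ c := by
      have hcop : IsCoprime (m : ℤ) x := by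
        rwa [Int.isCoprime_iff_gcd_eq_one, Int.gcd_comm]
      rw [← Int.natCast_dvd_natCast]
      exact hcop.dvd_of_dvd_mul_right (by simpa [show a = 0 by omega] using h₁)
    have hsplit : m * n = m * (n - s) + s * m := by
      rw [mul_comm s, ← mul_add, Nat.sub_add_cancel hsn]
    have hsucc : (n + 1 - s) * m = m * (n - s + 1) := by
      rw [mul_comm, Nat.sub_add_comm hsn]
    have : m ≤ s * m := Nat.le_mul_of_pos_left m hs1
    exact (Nat.not_dvd_of_lt_of_lt_mul_succ (k := n - s) (by omega) (by omega) hmc).elim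

theorem stmt_0_general (m n : ℕ)
    (e1 e2 : ZMod m × ZMod (m * n))
    (he1 : addOrderOf e1 = m) (he2 : addOrderOf e2 = m * n)
    (hind : ∀ a b : ℤ, a • e1 + b • e2 = 0 → a • e1 = 0 ∧ b • e2 = 0)
    (x : ℤ) (hx : Int.gcd x m = 1)
    (s : ℕ) (hs1 : 1 ≤ s) (hsn : s ≤ n) :
    (Multiset.replicate (m - 1) e1 + Multiset.replicate (s * m - 1) e2 +
        Multiset.replicate ((n + 1 - s) * m - 1) ((-x) • e1 + e2)).card
      = 2 * m + m * n - 3 ∧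
    ¬ ∃ T ≤ Multiset.replicate (m - 1) e1 + Multiset.replicate (s * m - 1) e2 +
        Multiset.replicate ((n + 1 - s) * m - 1) ((-x) • e1 + e2),
        T ≠ 0 ∧ T.sum = 0 ∧ Multiset.card T ≤ m * n := by
  constructor
  · obtain rfl | hm := m.eq_zero_or_pos
    · simp
    have hsum : s * m + (n + 1 - s) * m = m * n + m := by
      rw [← add_mul, Nat.add_sub_cancel' (by omega)]; ring
    have : m ≤ s * m := Nat.le_mul_of_pos_left m hs1
    have : m ≤ (n + 1 - s) * m := Nat.le_mul_of_pos_left m (by omega)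
    simp only [Multiset.card_add, Multiset.card_replicate]
    omega
  · rintro ⟨T, hle, hT0, hTsum, hTcard⟩
    obtain ⟨a, ha, b, hb, c, hc, rfl⟩ :=
      Multiset.exists_eq_of_le_replicate_add_replicate_add_replicate hle
    simp only [Multiset.sum_add, Multiset.sum_replicate] at hTsum
    simp only [Multiset.card_add, Multiset.card_replicate] at hTcard
    obtain ⟨h₁, h₂⟩ := addOrderOf_dvd_of_nsmul_add_nsmul_add_nsmul_eq_zero hind hTsum
    rw [he1] at h₁
    rw [he2] at h₂
    have := add_add_eq_zero_of_dvd hx hs1 hsn ha hb hc hTcard h₁ (by exact_mod_cast h₂)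
    obtain ⟨rfl, rfl, rfl⟩ : a = 0 ∧ b = 0 ∧ c = 0 := by omega
    simp at hT0

/-- The sequence `e₁^{m-1} e₂^{sm-1} (-x e₁ + e₂)^{(n+1-s)m-1}` over
`C_m ⊕ C_{mn}` has length `2m + mn - 3 = η(G) - 1` and no short zero-sum subsequence. -/
theorem stmt_0 (m n : ℕ) (hm : 2 ≤ m) (hn : 0 < n)
    (e1 e2 : ZMod m × ZMod (m * n))
    (he1 : addOrderOf e1 = m) (he2 : addOrderOf e2 = m * n)
    (hind : ∀ a b : ℤ, a • e1 + b • e2 = 0 → a • e1 = 0 ∧ b • e2 = 0)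
    (hgen : AddSubgroup.closure ({e1, e2} : Set (ZMod m × ZMod (m * n))) = ⊤)
    (x : ℤ) (hx : Int.gcd x m = 1)
    (s : ℕ) (hs1 : 1 ≤ s) (hsn : s ≤ n) :
    (Multiset.replicate (m - 1) e1 + Multiset.replicate (s * m - 1) e2 +
        Multiset.replicate ((n + 1 - s) * m - 1) ((-x) • e1 + e2)).card
      = 2 * m + m * n - 3 ∧
    ¬ ∃ T ≤ Multiset.replicate (m - 1) e1 + Multiset.replicate (s * m - 1) e2 +
        Multiset.replicate ((n + 1 - s) * m - 1) ((-x) • e1 + e2),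
        T ≠ 0 ∧ T.sum = 0 ∧ Multiset.card T ≤ m * n :=
  stmt_0_general m n e1 e2 he1 he2 hind x hx s hs1 hsn
end

section
/- Let m, n be positive integers with m ≥ 2, let G = C_m ⊕ C_{mn}, let {e_1, e_2} be a basis of G with ord(e_1) = m and ord(e_2) = mn, let x be an integer with gcd(x, m) = 1, let s, t ∈ [1, n], and let g ∈ G. Then the sequence S = g^{tm−1} · (e_1 + g)^{(n+1−t)m−1} · (e_2 + g)^{sm−1} · (−x·e_1 + e_2 + g)^{(n+1−s)m−1} has length 2m + 2mn − 4 (which equals s(G) − 1) and has no zero-sum subsequence of length mn = exp(G). -/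
/-!
A subsequence of length `mn` consists of `a` copies of `g`, `b` of `e₁ + g`, `c` of `e₂ + g`
and `d` of `-x e₁ + e₂ + g`. Since `mn g = 0`, its sum is `(b - d x) e₁ + (c + d) e₂`, so by
independence `m ∣ b - d x` and `mn ∣ c + d`. As `c + d ≤ mn`, either `c = d = 0`, and then
`m ∣ b < (n + 1 - t) m` forces `a ≥ t m`; or `a = b = 0`, and then `m ∣ d x`, hence `m ∣ d`,
forces `c ≥ s m`. Both exceed the multiplicities available in the sequence.
-/

theorem Multiset.exists_eq_add_of_le_add {α : Type*} [DecidableEq α] {s t u : Multiset α}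
    (h : s ≤ t + u) : ∃ s₁ ≤ t, ∃ s₂ ≤ u, s = s₁ + s₂ := by
  refine ⟨s ∩ t, Multiset.inter_le_right, s - t, ?_, ?_⟩
  · rwa [Multiset.sub_le_iff_le_add, add_comm]
  · ext a
    simp only [Multiset.count_add, Multiset.count_inter, Multiset.count_sub]
    omega

theorem Multiset.exists_eq_replicate_add_of_le {α : Type*} [DecidableEq α] {s : Multiset α}
    {A B C D : ℕ} {p q r w : α}
    (h : s ≤ replicate A p + replicate B q + replicate C r + replicate D w) :
    ∃ a ≤ A, ∃ b ≤ B, ∃ c ≤ C, ∃ d ≤ D,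
      s = replicate a p + replicate b q + replicate c r + replicate d w := by
  obtain ⟨s₃, hs₃, _, hsd, rfl⟩ := exists_eq_add_of_le_add h
  obtain ⟨s₂, hs₂, _, hsc, rfl⟩ := exists_eq_add_of_le_add hs₃
  obtain ⟨_, hsa, _, hsb, rfl⟩ := exists_eq_add_of_le_add hs₂
  obtain ⟨a, ha, rfl⟩ := le_replicate_iff.1 hsa
  obtain ⟨b, hb, rfl⟩ := le_replicate_iff.1 hsb
  obtain ⟨c, hc, rfl⟩ := le_replicate_iff.1 hsc
  obtain ⟨d, hd, rfl⟩ := le_replicate_iff.1 hsd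
  exact ⟨a, ha, b, hb, c, hc, d, hd, rfl⟩

theorem ZMod.prod_mul_nsmul_eq_zero (m n : ℕ) (y : ZMod m × ZMod (m * n)) :
    (m * n) • y = 0 := by
  ext
  · rw [Prod.smul_fst, Prod.fst_zero, nsmul_eq_mul, Nat.cast_mul, ZMod.natCast_self, zero_mul,
      zero_mul]
  · rw [Prod.smul_snd, Prod.snd_zero, nsmul_eq_mul, ZMod.natCast_self, zero_mul]

theorem Nat.mul_le_of_dvd_of_add_eq {m n t a b : ℕ} (ht : t ≤ n) (hb : m ∣ b)
    (hb_lt : b < (n + 1 - t) * m) (hab : a + b = m * n) : t * m ≤ a := by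
  have hsucc : (n + 1 - t) * m = (n - t) * m + m := by
    rw [show n + 1 - t = n - t + 1 by omega, Nat.succ_mul]
  have hb_le : b ≤ (n - t) * m :=
    Nat.le_of_lt_add_of_dvd (hsucc ▸ hb_lt) hb (dvd_mul_left m _)
  have hsplit : (n - t) * m + t * m = m * n := by
    rw [← Nat.add_mul, Nat.sub_add_cancel ht, Nat.mul_comm]
  omega

theorem dvd_of_sum_replicate_eq_zero {G : Type*} [AddCommGroup G] {e₁ e₂ g : G} {m N : ℕ}
    (he₁ : addOrderOf e₁ = m) (he₂ : addOrderOf e₂ = N)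
    (hind : ∀ a b : ℤ, a • e₁ + b • e₂ = 0 → a • e₁ = 0 ∧ b • e₂ = 0) (hg : N • g = 0)
    (x : ℤ) {a b c d : ℕ} (hcard : a + b + c + d = N)
    (hsum : a • g + b • (e₁ + g) + c • (e₂ + g) + d • ((-x) • e₁ + e₂ + g) = 0) :
    (m : ℤ) ∣ b - d * x ∧ N ∣ c + d := by
  have hexpand : a • g + b • (e₁ + g) + c • (e₂ + g) + d • ((-x) • e₁ + e₂ + g)
      = ((b : ℤ) - d * x) • e₁ + ((c : ℤ) + d) • e₂ + (a + b + c + d) • g := by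
    simp only [← natCast_zsmul]
    push_cast
    module
  rw [hexpand, hcard, hg, add_zero] at hsum
  obtain ⟨h₁, h₂⟩ := hind _ _ hsum
  refine ⟨he₁ ▸ addOrderOf_dvd_iff_zsmul_eq_zero.2 h₁, ?_⟩
  exact_mod_cast he₂ ▸ addOrderOf_dvd_iff_zsmul_eq_zero.2 h₂

theorem not_dvd_and_dvd_of_lt_mul {m n s t a b c d : ℕ} {x : ℤ} (hx : Int.gcd x m = 1)
    (hsn : s ≤ n) (htn : t ≤ n) (ha : a < t * m) (hb : b < (n + 1 - t) * m)
    (hc : c < s * m) (hd : d < (n + 1 - s) * m) (hcard : a + b + c + d = m * n) :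
    ¬ ((m : ℤ) ∣ b - d * x ∧ m * n ∣ c + d) := by
  rintro ⟨hdvd₁, hdvd₂⟩
  by_cases hcd : c + d = 0
  · obtain ⟨rfl, rfl⟩ : c = 0 ∧ d = 0 := by omega
    have hmb : m ∣ b := by exact_mod_cast (by simpa using hdvd₁ : (m : ℤ) ∣ b)
    have := Nat.mul_le_of_dvd_of_add_eq htn hmb hb (by omega)
    omega
  · have hcd : c + d = m * n := Nat.eq_of_dvd_of_lt_two_mul hcd hdvd₂ (by omega)
    obtain ⟨rfl, rfl⟩ : a = 0 ∧ b = 0 := by omega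
    have hcop : IsCoprime (m : ℤ) x := Int.isCoprime_iff_gcd_eq_one.2 (Int.gcd_comm x m ▸ hx)
    have hmd : m ∣ d := by
      have : (m : ℤ) ∣ d * x := by simpa using hdvd₁
      exact_mod_cast hcop.dvd_of_dvd_mul_right this
    have := Nat.mul_le_of_dvd_of_add_eq hsn hmd hd (by omega)
    omega

theorem stmt_3_general (m n : ℕ) (hm : 2 ≤ m)
    (e1 e2 : ZMod m × ZMod (m * n))
    (he1 : addOrderOf e1 = m) (he2 : addOrderOf e2 = m * n)
    (hind : ∀ a b : ℤ, a • e1 + b • e2 = 0 → a • e1 = 0 ∧ b • e2 = 0)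
    (x : ℤ) (hx : Int.gcd x m = 1)
    (s t : ℕ) (hs1 : 1 ≤ s) (hsn : s ≤ n) (ht1 : 1 ≤ t) (htn : t ≤ n)
    (g : ZMod m × ZMod (m * n)) :
    (Multiset.replicate (t * m - 1) g +
        Multiset.replicate ((n + 1 - t) * m - 1) (e1 + g) +
        Multiset.replicate (s * m - 1) (e2 + g) +
        Multiset.replicate ((n + 1 - s) * m - 1) ((-x) • e1 + e2 + g)).card
      = 2 * m + 2 * (m * n) - 4 ∧
    ¬ ∃ T ≤ Multiset.replicate (t * m - 1) g +
        Multiset.replicate ((n + 1 - t) * m - 1) (e1 + g) +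
        Multiset.replicate (s * m - 1) (e2 + g) +
        Multiset.replicate ((n + 1 - s) * m - 1) ((-x) • e1 + e2 + g),
        T.sum = 0 ∧ Multiset.card T = m * n := by
  have hpos : ∀ k, 1 ≤ k → 0 < k * m := fun k hk => Nat.mul_pos hk (by omega)
  have hsplit : ∀ k ≤ n, k * m + (n + 1 - k) * m = m * n + m := fun k hk => by
    rw [← Nat.add_mul, Nat.add_sub_cancel' (by omega), Nat.succ_mul, Nat.mul_comm]
  have := hsplit t htn; have := hsplit s hsn
  have := hpos t ht1; have := hpos s hs1
  have := hpos (n + 1 - t) (by omega); have := hpos (n + 1 - s) (by omega)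
  refine ⟨by simp only [Multiset.card_add, Multiset.card_replicate]; omega, ?_⟩
  rintro ⟨T, hT, hsum, hcard⟩
  obtain ⟨a, ha, b, hb, c, hc, d, hd, rfl⟩ := Multiset.exists_eq_replicate_add_of_le hT
  simp only [Multiset.card_add, Multiset.card_replicate] at hcard
  simp only [Multiset.sum_add, Multiset.sum_replicate] at hsum
  exact not_dvd_and_dvd_of_lt_mul hx hsn htn (by omega) (by omega) (by omega) (by omega) hcard
    (dvd_of_sum_replicate_eq_zero he1 he2 hind (ZMod.prod_mul_nsmul_eq_zero m n g) x hcard hsum)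

/-- The sequence `g^{tm-1} (e₁+g)^{(n+1-t)m-1} (e₂+g)^{sm-1}
(-x e₁ + e₂ + g)^{(n+1-s)m-1}` over `C_m ⊕ C_{mn}` has length `2m + 2mn - 4 = s(G) - 1`
and no zero-sum subsequence of length `mn = exp(G)`. -/
theorem stmt_3 (m n : ℕ) (hm : 2 ≤ m) (hn : 0 < n)
    (e1 e2 : ZMod m × ZMod (m * n))
    (he1 : addOrderOf e1 = m) (he2 : addOrderOf e2 = m * n)
    (hind : ∀ a b : ℤ, a • e1 + b • e2 = 0 → a • e1 = 0 ∧ b • e2 = 0)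
    (hgen : AddSubgroup.closure ({e1, e2} : Set (ZMod m × ZMod (m * n))) = ⊤)
    (x : ℤ) (hx : Int.gcd x m = 1)
    (s t : ℕ) (hs1 : 1 ≤ s) (hsn : s ≤ n) (ht1 : 1 ≤ t) (htn : t ≤ n)
    (g : ZMod m × ZMod (m * n)) :
    (Multiset.replicate (t * m - 1) g +
        Multiset.replicate ((n + 1 - t) * m - 1) (e1 + g) +
        Multiset.replicate (s * m - 1) (e2 + g) +
        Multiset.replicate ((n + 1 - s) * m - 1) ((-x) • e1 + e2 + g)).card
      = 2 * m + 2 * (m * n) - 4 ∧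
    ¬ ∃ T ≤ Multiset.replicate (t * m - 1) g +
        Multiset.replicate ((n + 1 - t) * m - 1) (e1 + g) +
        Multiset.replicate (s * m - 1) (e2 + g) +
        Multiset.replicate ((n + 1 - s) * m - 1) ((-x) • e1 + e2 + g),
        T.sum = 0 ∧ Multiset.card T = m * n :=
  stmt_3_general m n hm e1 e2 he1 he2 hind x hx s t hs1 hsn ht1 htn g
end

section
/- Let m, n be positive integers with m ≥ 2 and n ≥ 3, and let G = C_m ⊕ C_{mn}. Then there exists a sequence S over G of length 2m + 2mn − 4 (which equals s(G) − 1) that has no zero-sum subsequence of length mn = exp(G), and such that the multiplicity of every element g ∈ G in S is strictly less than mn − 1 = exp(G) − 1. -/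
/-!
Take `S = (1,0)^{2m-1} (0,0)^{mn-m-1} (1,1)^{2m-1} (0,1)^{mn-m-1}`. A subsequence using these four
elements `a, b, c, d` times has sum `(a + c, c + d)`. If it has length `mn` and sum zero, then
`mn ∣ c + d ≤ mn` forces `c + d = 0` or `c + d = mn`; in the first case `m < a < 2m` and in the
second `m < c < 2m`, while `m ∣ a + c` would make that number `m` itself.
-/

namespace Multiset

variable {α : Type*}

theorem exists_le_le_eq_add_of_le_add [DecidableEq α] {T A B : Multiset α} (h : T ≤ A + B) :
    ∃ A' ≤ A, ∃ B' ≤ B, T = A' + B' :=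
  ⟨T ∩ A, inter_le_right, T - A, Multiset.sub_le_iff_le_add'.2 h,
    by rw [Multiset.add_comm, sub_add_inter]⟩

theorem exists_eq_replicate_of_le_replicate_four {T : Multiset α} {x y z w : α}
    {p q r s : ℕ} (h : T ≤ replicate p x + replicate q y + replicate r z + replicate s w) :
    ∃ a ≤ p, ∃ b ≤ q, ∃ c ≤ r, ∃ d ≤ s,
      T = replicate a x + replicate b y + replicate c z + replicate d w := by
  classical
  obtain ⟨T₃, h₃, D, hD, rfl⟩ := exists_le_le_eq_add_of_le_add h
  obtain ⟨T₂, h₂, C, hC, rfl⟩ := exists_le_le_eq_add_of_le_add h₃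
  obtain ⟨A, hA, B, hB, rfl⟩ := exists_le_le_eq_add_of_le_add h₂
  obtain ⟨a, ha, rfl⟩ := le_replicate_iff.1 hA
  obtain ⟨b, hb, rfl⟩ := le_replicate_iff.1 hB
  obtain ⟨c, hc, rfl⟩ := le_replicate_iff.1 hC
  obtain ⟨d, hd, rfl⟩ := le_replicate_iff.1 hD
  exact ⟨a, ha, b, hb, c, hc, d, hd, rfl⟩

end Multiset

theorem not_dvd_add_and_dvd_add {m N a b c d : ℕ} (ha : a < 2 * m) (hb : b + m < N)
    (hc : c < 2 * m) (hd : d + m < N) (hsum : a + b + c + d = N) :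
    ¬ (m ∣ a + c ∧ N ∣ c + d) := by
  rintro ⟨hac, hcd⟩
  rcases Nat.eq_zero_or_pos (c + d) with hcd0 | hcd0
  · have hc0 : c = 0 := by omega
    subst hc0
    have := Nat.eq_of_dvd_of_lt_two_mul (by omega) hac (by omega)
    omega
  · have hcdN : c + d = N := Nat.eq_of_dvd_of_lt_two_mul hcd0.ne' hcd (by omega)
    have ha0 : a = 0 := by omega
    subst ha0
    have := Nat.eq_of_dvd_of_lt_two_mul (by omega) hac (by omega)
    omega

section

open Multiset

variable {m n : ℕ}

def extremalSeq (m n : ℕ) : Multiset (ZMod m × ZMod (m * n)) :=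
  replicate (2 * m - 1) (1, 0) + replicate (m * n - m - 1) (0, 0) +
    replicate (2 * m - 1) (1, 1) + replicate (m * n - m - 1) (0, 1)

theorem card_extremalSeq (hm : 2 ≤ m) (hn : 3 ≤ n) :
    card (extremalSeq m n) = 2 * m + 2 * (m * n) - 4 := by
  have : 3 * m ≤ m * n := by nlinarith
  simp only [extremalSeq, card_add, card_replicate]
  omega

theorem count_extremalSeq_lt (hm : 2 ≤ m) (hn : 3 ≤ n) (g : ZMod m × ZMod (m * n)) :
    count g (extremalSeq m n) < m * n - 1 := by
  have : 3 * m ≤ m * n := by nlinarith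
  have : Fact (1 < m) := ⟨by omega⟩
  have : Fact (1 < m * n) := ⟨by omega⟩
  have h₁ : (1 : ZMod m) ≠ 0 := one_ne_zero
  have h₂ : (1 : ZMod (m * n)) ≠ 0 := one_ne_zero
  obtain ⟨u, v⟩ := g
  simp only [extremalSeq, count_add, count_replicate, Prod.mk.injEq]
  split_ifs <;> simp_all <;> omega

theorem exists_counts_of_le_extremalSeq {T : Multiset (ZMod m × ZMod (m * n))}
    (hT : T ≤ extremalSeq m n) :
    ∃ a b c d : ℕ, a ≤ 2 * m - 1 ∧ b ≤ m * n - m - 1 ∧ c ≤ 2 * m - 1 ∧ d ≤ m * n - m - 1 ∧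
      card T = a + b + c + d ∧ T.sum = (((a + c : ℕ) : ZMod m), ((c + d : ℕ) : ZMod (m * n))) := by
  obtain ⟨a, ha, b, hb, c, hc, d, hd, rfl⟩ := exists_eq_replicate_of_le_replicate_four hT
  exact ⟨a, b, c, d, ha, hb, hc, hd, by simp, by simp⟩

end

/-- For `G = C_m ⊕ C_{mn}` with `m ≥ 2` and `n ≥ 3`, there is a sequence of
length `2m + 2mn - 4 = s(G) - 1` with no zero-sum subsequence of length `mn = exp(G)` in
which every element has multiplicity strictly less than `mn - 1 = exp(G) - 1`. -/
theorem stmt_8 (m n : ℕ) (hm : 2 ≤ m) (hn : 3 ≤ n) :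
    ∃ S : Multiset (ZMod m × ZMod (m * n)),
      S.card = 2 * m + 2 * (m * n) - 4 ∧
      (¬ ∃ T ≤ S, T.sum = 0 ∧ Multiset.card T = m * n) ∧
      ∀ g : ZMod m × ZMod (m * n), S.count g < m * n - 1 := by
  refine ⟨extremalSeq m n, card_extremalSeq hm hn, ?_, count_extremalSeq_lt hm hn⟩
  rintro ⟨T, hT, hsum, hcard⟩
  obtain ⟨a, b, c, d, ha, hb, hc, hd, hcardT, hsumT⟩ := exists_counts_of_le_extremalSeq hT
  have hmn : m < m * n := by nlinarith
  rw [hsumT, Prod.mk_eq_zero, ZMod.natCast_eq_zero_iff, ZMod.natCast_eq_zero_iff] at hsum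
  exact not_dvd_add_and_dvd_add (b := b) (by omega) (by omega) (by omega) (by omega) (by omega) hsum
end

section
/- Let m, n be positive integers and let G = C_m ⊕ C_{mn}. Then the Davenport constant satisfies D(G) = m + mn − 1; that is, every sequence over G of length at least m + mn − 1 has a nonempty zero-sum subsequence, and there exists a sequence over G of length m + mn − 2 with no nonempty zero-sum subsequence. -/
/-!
Upper bound: if `K → G → Q` is exact, a long sequence over `G` can be cut into disjoint short
blocks whose sums lie in the image of `K`, and a zero-sum subsequence of the lifted block sums in
`K` gives one in `G`. For `ℤ/n → ℤ/m ⊕ ℤ/mn → (ℤ/m)²` with `D(ℤ/n) ≤ n`, this reduces the claim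
to Olson's bounds `D((ℤ/m)²) ≤ 2m - 1` and `η((ℤ/m)²) ≤ 3m - 2`, which follow from
Chevalley–Warning for prime `m` and from the same block argument for composite `m`.
Lower bound: `(1,0)^(m-1) (0,1)^(mn-1)` is zero-sum free.
-/

namespace Multiset

variable {α β : Type*}

theorem exists_le_map_eq_of_le_map {f : α → β} {t : Multiset β} {s : Multiset α}
    (h : t ≤ s.map f) : ∃ u ≤ s, u.map f = t := by
  induction t using Quotient.inductionOn
  induction s using Quotient.inductionOn
  obtain ⟨l, hperm, hsub⟩ := h
  obtain ⟨l', hl', rfl⟩ := List.sublist_map_iff.mp hsub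
  exact ⟨l', hl'.subperm, Quot.sound hperm⟩

theorem exists_le_card_eq {s : Multiset α} {n : ℕ} (h : n ≤ card s) :
    ∃ t ≤ s, card t = n := by
  classical
  obtain ⟨u, hu, hcard⟩ := Finset.exists_subset_card_eq (s := s.toEnumFinset) (by simpa using h)
  exact ⟨u.1.map Prod.fst, map_fst_le_of_subset_toEnumFinset hu, by simpa using hcard⟩

theorem join_le_join {S T : Multiset (Multiset α)} (h : S ≤ T) : S.join ≤ T.join := by
  obtain ⟨U, rfl⟩ := le_iff_exists_add.mp h
  rw [join_add]
  exact le_add_right _ _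

theorem le_join_of_mem {S : Multiset (Multiset α)} {s : Multiset α} (h : s ∈ S) : s ≤ S.join := by
  obtain ⟨U, rfl⟩ := exists_cons_of_mem h
  rw [join_cons]
  exact le_add_right _ _

theorem card_join_le {S : Multiset (Multiset α)} {a : ℕ} (h : ∀ s ∈ S, card s ≤ a) :
    card S.join ≤ card S * a := by
  rw [card_join, ← card_map card S]
  exact sum_le_card_nsmul _ _ (by simpa using h)

end Multiset

open Multiset

/-- `D(G) ≤ ℓ`. -/
def HasZeroSumSubseq (G : Type*) [AddCommMonoid G] (ℓ : ℕ) : Prop :=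
  ∀ S : Multiset G, ℓ ≤ card S → ∃ T ≤ S, T ≠ 0 ∧ T.sum = 0

/-- With `a = exp G`, this is `η(G) ≤ ℓ`. -/
def HasShortZeroSumSubseq (G : Type*) [AddCommMonoid G] (ℓ a : ℕ) : Prop :=
  ∀ S : Multiset G, ℓ ≤ card S → ∃ T ≤ S, T ≠ 0 ∧ T.sum = 0 ∧ card T ≤ a

section Basic

variable {G : Type*} [AddCommMonoid G] {ℓ a : ℕ}

theorem HasShortZeroSumSubseq.hasZeroSumSubseq (h : HasShortZeroSumSubseq G ℓ a) :
    HasZeroSumSubseq G ℓ := fun S hS =>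
  let ⟨T, hTS, hT0, hTsum, _⟩ := h S hS
  ⟨T, hTS, hT0, hTsum⟩

theorem HasShortZeroSumSubseq.mono {ℓ' a' : ℕ} (h : HasShortZeroSumSubseq G ℓ a)
    (hℓ : ℓ ≤ ℓ') (ha : a ≤ a') : HasShortZeroSumSubseq G ℓ' a' := fun S hS =>
  let ⟨T, hTS, hT0, hTsum, hT⟩ := h S (hℓ.trans hS)
  ⟨T, hTS, hT0, hTsum, hT.trans ha⟩

theorem HasZeroSumSubseq.hasShortZeroSumSubseq (h : HasZeroSumSubseq G ℓ) :
    HasShortZeroSumSubseq G ℓ ℓ := fun S hS => by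
  obtain ⟨S', hS'S, hS'⟩ := exists_le_card_eq hS
  obtain ⟨T, hTS', hT0, hTsum⟩ := h S' hS'.ge
  exact ⟨T, hTS'.trans hS'S, hT0, hTsum, hS' ▸ card_le_card hTS'⟩

end Basic

theorem hasZeroSumSubseq_card (G : Type*) [AddCommGroup G] [Fintype G] :
    HasZeroSumSubseq G (Fintype.card G) := by
  intro S hS
  obtain ⟨l, rfl⟩ : ∃ l : List G, (l : Multiset G) = S := ⟨S.toList, S.coe_toList⟩
  have hlen : Fintype.card G ≤ l.length := by simpa using hS
  -- two of the `|G| + 1` prefix sums coincide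
  obtain ⟨i, j, hij, hsum⟩ := Fintype.exists_ne_map_eq_of_card_lt
    (fun i : Fin (Fintype.card G + 1) => (l.take i).sum) (by simp)
  wlog hlt : (i : ℕ) < j generalizing i j
  · exact this j i hij.symm hsum.symm (by omega)
  refine ⟨((l.take j).drop i : List G),
    coe_le.mpr ((List.drop_sublist _ _).trans (List.take_sublist _ _)).subperm, ?_, ?_⟩
  · simp only [ne_eq, coe_eq_zero, ← List.length_eq_zero_iff, List.length_drop,
      List.length_take]
    omega
  · have hsplit := congrArg List.sum (List.take_append_drop i (l.take j))
    rw [List.take_take, min_eq_left hlt.le, List.sum_append, hsum] at hsplit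
    rw [Multiset.sum_coe]
    exact left_eq_add.mp hsplit.symm

section Blocks

variable {G Q K : Type*} [AddCommMonoid G] [AddCommMonoid Q] [AddCommMonoid K]

def IsBlock (f : G →+ Q) (a : ℕ) (B : Multiset G) : Prop :=
  B ≠ 0 ∧ f B.sum = 0 ∧ card B ≤ a

variable {f : G →+ Q} {ℓ a : ℕ}

theorem IsBlock.mono {a' : ℕ} {B : Multiset G} (hB : IsBlock f a B) (ha : a ≤ a') :
    IsBlock f a' B :=
  ⟨hB.1, hB.2.1, hB.2.2.trans ha⟩

theorem HasShortZeroSumSubseq.exists_block (hQ : HasShortZeroSumSubseq Q ℓ a) (f : G →+ Q)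
    {S : Multiset G} (hS : ℓ ≤ card S) : ∃ B ≤ S, IsBlock f a B := by
  obtain ⟨V, hVS, hV0, hVsum, hV⟩ := hQ (S.map f) (by simpa using hS)
  obtain ⟨B, hBS, rfl⟩ := exists_le_map_eq_of_le_map hVS
  refine ⟨B, hBS, by simpa using hV0, by rwa [map_multiset_sum], by simpa using hV⟩

theorem HasShortZeroSumSubseq.exists_blocks [DecidableEq G] (hQ : HasShortZeroSumSubseq Q ℓ a)
    (f : G →+ Q) {ℓ' : ℕ} (hℓ : ℓ ≤ ℓ' + a) (k : ℕ) {S : Multiset G} (hS : k * a + ℓ' ≤ card S) :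
    ∃ M : Multiset (Multiset G), card M = k ∧ M.join ≤ S ∧ (∀ B ∈ M, IsBlock f a B) ∧
      ℓ' ≤ card (S - M.join) := by
  induction k generalizing S with
  | zero => exact ⟨0, rfl, by simp, by simp, by simpa using hS⟩
  | succ k ih =>
    rw [Nat.succ_mul] at hS
    obtain ⟨B, hBS, hB⟩ := hQ.exists_block f (S := S) (by omega)
    have hcard : card (S - B) = card S - card B := card_sub hBS
    obtain ⟨M, hM, hMS, hMblocks, hrest⟩ := ih (S := S - B) (by have := hB.2.2; omega)
    refine ⟨B ::ₘ M, by simp [hM], ?_, ?_, ?_⟩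
    · rw [join_cons]
      calc B + M.join ≤ B + (S - B) := add_le_add_right hMS B
        _ = S := add_tsub_cancel_of_le hBS
    · simpa [hB] using hMblocks
    · rwa [join_cons, ← tsub_tsub]

variable {φ : K →+ G}

theorem exists_zero_sum_le_join (hexact : ∀ x, f x = 0 → x ∈ Set.range φ)
    {M : Multiset (Multiset G)} (hM : ∀ B ∈ M, IsBlock f a B) {c : ℕ}
    (hK : HasShortZeroSumSubseq K (card M) c) :
    ∃ T ≤ M.join, T ≠ 0 ∧ T.sum = 0 ∧ card T ≤ c * a := by
  have : Nonempty K := ⟨0⟩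
  set lift : Multiset G → K := fun B => Function.invFun φ B.sum
  have hlift : ∀ B ∈ M, φ (lift B) = B.sum := fun B hB =>
    Function.invFun_eq (hexact _ (hM B hB).2.1)
  obtain ⟨V, hVM, hV0, hVsum, hV⟩ := hK (M.map lift) (by simp)
  obtain ⟨N, hNM, rfl⟩ := exists_le_map_eq_of_le_map hVM
  have hN : ∀ B ∈ N, IsBlock f a B := fun B hB => hM B (mem_of_le hNM hB)
  refine ⟨N.join, join_le_join hNM, ?_, ?_, ?_⟩
  · obtain ⟨B, hB⟩ := exists_mem_of_ne_zero (by simpa using hV0)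
    exact fun h => (hN B hB).1 (le_zero.mp (h ▸ le_join_of_mem hB))
  · calc N.join.sum = (N.map (φ ∘ lift)).sum := by
          rw [sum_join]
          exact congrArg _ (map_congr rfl fun B hB => (hlift B (mem_of_le hNM hB)).symm)
      _ = φ (N.map lift).sum := by rw [map_multiset_sum, Multiset.map_map]
      _ = 0 := by rw [hVsum, _root_.map_zero]
  · calc card N.join ≤ card N * a := card_join_le fun B hB => (hN B hB).2.2
      _ ≤ c * a := Nat.mul_le_mul_right a (by simpa using hV)

theorem HasShortZeroSumSubseq.of_exact (hexact : ∀ x, f x = 0 → x ∈ Set.range φ)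
    (hQ : HasShortZeroSumSubseq Q ℓ a) {ℓ' a' : ℕ} (hQ' : HasShortZeroSumSubseq Q ℓ' a')
    (hℓ : ℓ ≤ ℓ' + a) {k c : ℕ} (hK : HasShortZeroSumSubseq K (k + 1) c) :
    HasShortZeroSumSubseq G (k * a + ℓ') (c * max a a') := by
  classical
  intro S hS
  obtain ⟨M, hM, hMS, hMblocks, hrest⟩ := hQ.exists_blocks f hℓ k hS
  obtain ⟨B, hBS, hB⟩ := hQ'.exists_block f hrest
  have hblocks : ∀ B' ∈ B ::ₘ M, IsBlock f (max a a') B' := by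
    simpa using ⟨hB.mono (le_max_right a a'),
      fun B' hB' => (hMblocks B' hB').mono (le_max_left a a')⟩
  obtain ⟨T, hT, hT0, hTsum, hTcard⟩ :=
    exists_zero_sum_le_join hexact hblocks (by simpa [hM] using hK)
  refine ⟨T, hT.trans ?_, hT0, hTsum, hTcard⟩
  calc (B ::ₘ M).join = B + M.join := join_cons _ _
    _ ≤ (S - M.join) + M.join := add_le_add_left hBS _
    _ = S := tsub_add_cancel_of_le hMS

end Blocks

theorem HasZeroSumSubseq.exists_short_of_card_eq {G : Type*} [AddCommGroup G] {a : ℕ}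
    (hG : HasZeroSumSubseq G (2 * a - 1)) {T : Multiset G} (hT : T.sum = 0)
    (hcard : card T = 2 * a) : ∃ U ≤ T, U ≠ 0 ∧ U.sum = 0 ∧ card U ≤ a := by
  classical
  obtain ⟨U, hUT, hU0, hUsum, hU⟩ := hG.hasShortZeroSumSubseq T (by omega)
  have hU1 : 0 < card U := card_pos.mpr hU0
  by_cases hUa : card U ≤ a
  · exact ⟨U, hUT, hU0, hUsum, hUa⟩
  have hcompl : card (T - U) = 2 * a - card U := by rw [card_sub hUT, hcard]
  refine ⟨T - U, tsub_le_self, ?_, ?_, by omega⟩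
  · rw [← card_pos, hcompl]
    omega
  · rw [← add_tsub_cancel_of_le hUT, sum_add, hUsum, zero_add] at hT
    exact hT

section Prime

variable {p : ℕ} [Fact p.Prime]

open Finset MvPolynomial in
theorem exists_nonempty_sum_eq_zero_of_card_mul_lt {ι σ : Type*} [Fintype σ]
    (v : ι → σ → ZMod p) {s : Finset ι} (hs : Fintype.card σ * (p - 1) < #s) :
    ∃ t ⊆ s, t.Nonempty ∧ ∑ i ∈ t, v i = 0 := by
  classical
  -- As `y ^ (p - 1)` is the indicator of `y ≠ 0`, a common zero `x ≠ 0` of the `F j` yields the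
  -- zero-sum subfamily `{i | x i ≠ 0}`; Chevalley–Warning provides one.
  let F : σ → MvPolynomial s (ZMod p) := fun j => ∑ i : s, v i j • X i ^ (p - 1)
  have hdeg : ∑ j, (F j).totalDegree < Fintype.card s := by
    calc ∑ j, (F j).totalDegree ≤ ∑ _j : σ, (p - 1) := by
          gcongr with j
          exact totalDegree_finsetSum_le fun i _ =>
            (totalDegree_smul_le ..).trans (totalDegree_X_pow ..).le
      _ < Fintype.card s := by simpa using hs
  let zero : {x // ∀ j, eval x (F j) = 0} :=
    ⟨0, by simp [F, (Fact.out : p.Prime).one_lt, tsub_eq_zero_iff_le]⟩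
  obtain ⟨x, hx⟩ := Fintype.exists_ne_of_one_lt_card ((Fact.out : p.Prime).one_lt.trans_le <|
    Nat.le_of_dvd (Fintype.card_pos_iff.2 ⟨zero⟩)
      (char_dvd_card_solutions_of_fintype_sum_lt p hdeg)) zero
  refine ⟨({i | x.1 i ≠ 0} : Finset s).map (Function.Embedding.subtype _), ?_, ?_, ?_⟩
  · simp +contextual [Finset.subset_iff]
  · rw [← Subtype.coe_ne_coe, Function.ne_iff] at hx
    obtain ⟨i, hi⟩ := hx
    exact ⟨i, by simpa [zero] using hi⟩
  · funext j
    simpa [F, ZMod.pow_card_sub_one, Finset.sum_filter, Finset.sum_apply] using x.2 j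

theorem hasZeroSumSubseq_zmod_prod_self_prime :
    HasZeroSumSubseq (ZMod p × ZMod p) (2 * p - 1) := by
  classical
  intro S hS
  have hp2 := (Fact.out : p.Prime).two_le
  obtain ⟨t, hts, ht0, hsum⟩ := exists_nonempty_sum_eq_zero_of_card_mul_lt
    (fun i : (ZMod p × ZMod p) × ℕ => ![i.1.1, i.1.2]) (s := S.toEnumFinset)
    (by simp only [Fintype.card_fin, card_toEnumFinset]; omega)
  refine ⟨t.1.map Prod.fst, map_fst_le_of_subset_toEnumFinset hts, by simpa using ht0.ne_empty, ?_⟩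
  have h0 := congrFun hsum 0
  have h1 := congrFun hsum 1
  simp only [Finset.sum_apply] at h0 h1
  simp only [Finset.sum_map_val]
  exact Prod.ext (by simpa [Prod.fst_sum] using h0) (by simpa [Prod.snd_sum] using h1)

theorem hasShortZeroSumSubseq_zmod_prod_self_prime :
    HasShortZeroSumSubseq (ZMod p × ZMod p) (3 * p - 2) p := by
  classical
  intro S hS
  have hp2 := (Fact.out : p.Prime).two_le
  obtain ⟨S', hS'S, hS'⟩ := exists_le_card_eq hS
  -- the extra coordinate `1` forces `p ∣ card T`
  obtain ⟨t, hts, ht0, hsum⟩ := exists_nonempty_sum_eq_zero_of_card_mul_lt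
    (fun i : (ZMod p × ZMod p) × ℕ => ![1, i.1.1, i.1.2]) (s := S'.toEnumFinset)
    (by simp only [Fintype.card_fin, card_toEnumFinset]; omega)
  set T := t.1.map Prod.fst
  have hTS : T ≤ S := (map_fst_le_of_subset_toEnumFinset hts).trans hS'S
  have hTcard : card T = t.card := by simp [T]
  have hT0 : T ≠ 0 := by simpa [T] using ht0.ne_empty
  have h0 := congrFun hsum 0
  have h1 := congrFun hsum 1
  have h2 := congrFun hsum 2
  simp only [Finset.sum_apply] at h0 h1 h2
  have hTsum : T.sum = 0 := by
    simp only [T, Finset.sum_map_val]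
    exact Prod.ext (by simpa [Prod.fst_sum] using h1) (by simpa [Prod.snd_sum] using h2)
  have hpt : p ∣ t.card := by simpa [ZMod.natCast_eq_zero_iff] using h0
  have ht : t.card ≤ 3 * p - 2 := by simpa [hS'] using Finset.card_le_card hts
  by_cases htp : t.card ≤ p
  · exact ⟨T, hTS, hT0, hTsum, hTcard ▸ htp⟩
  have ht2p : t.card = 2 * p := by
    obtain ⟨c, hc⟩ := hpt
    have hc1 : 1 < c := Nat.lt_of_mul_lt_mul_left (a := p) (by omega)
    have hc3 : c < 3 := Nat.lt_of_mul_lt_mul_left (a := p) (by omega)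
    obtain rfl : c = 2 := by omega
    omega
  obtain ⟨U, hUT, hU⟩ :=
    hasZeroSumSubseq_zmod_prod_self_prime.exists_short_of_card_eq hTsum (hTcard.trans ht2p)
  exact ⟨U, hUT.trans hTS, hU⟩

end Prime

namespace ZMod

/-- The embedding `ℤ/b ↪ ℤ/ab`, `1 ↦ a`, onto the kernel of the reduction `ℤ/ab → ℤ/a`. -/
def scaleHom (a b : ℕ) : ZMod b →+ ZMod (a * b) :=
  ZMod.lift b ⟨zmultiplesHom _ (a : ZMod (a * b)), by
    simp [← Nat.cast_mul, mul_comm]⟩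

theorem scaleHom_intCast (a b : ℕ) (z : ℤ) : scaleHom a b z = ((a * z : ℤ) : ZMod (a * b)) := by
  simp [scaleHom, ZMod.lift_coe, mul_comm]

theorem mem_range_scaleHom {a b : ℕ} {x : ZMod (a * b)}
    (hx : ZMod.castHom (dvd_mul_right a b) (ZMod a) x = 0) : x ∈ Set.range (scaleHom a b) := by
  obtain ⟨z, rfl⟩ := ZMod.intCast_surjective x
  rw [map_intCast, ZMod.intCast_zmod_eq_zero_iff_dvd] at hx
  obtain ⟨w, rfl⟩ := hx
  exact ⟨w, scaleHom_intCast a b w⟩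

end ZMod

/-- Olson's bounds `D(C_m²) ≤ 2m - 1` and `η(C_m²) ≤ 3m - 2`. -/
def ZModSqBounds (m : ℕ) : Prop :=
  HasZeroSumSubseq (ZMod m × ZMod m) (2 * m - 1) ∧
    HasShortZeroSumSubseq (ZMod m × ZMod m) (3 * m - 2) m

theorem zmodSqBounds_one : ZModSqBounds 1 := by
  have h := (hasZeroSumSubseq_card (ZMod 1 × ZMod 1)).hasShortZeroSumSubseq
  simp only [Fintype.card_prod, ZMod.card, mul_one] at h
  exact ⟨h.hasZeroSumSubseq, h⟩

theorem zmodSqBounds_prime {p : ℕ} (hp : p.Prime) : ZModSqBounds p :=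
  have := Fact.mk hp
  ⟨hasZeroSumSubseq_zmod_prod_self_prime, hasShortZeroSumSubseq_zmod_prod_self_prime⟩

theorem ZModSqBounds.mul {a b : ℕ} (ha : ZModSqBounds a) (hb : ZModSqBounds b) (ha2 : 2 ≤ a)
    (hb2 : 2 ≤ b) : ZModSqBounds (a * b) := by
  obtain ⟨Da, Ea⟩ := ha
  obtain ⟨Db, Eb⟩ := hb
  let c := (ZMod.castHom (dvd_mul_right a b) (ZMod a)).toAddMonoidHom
  have hexact : ∀ x, c.prodMap c x = 0 →
      x ∈ Set.range ((ZMod.scaleHom a b).prodMap (ZMod.scaleHom a b)) := by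
    rintro ⟨x₁, x₂⟩ hx
    rw [AddMonoidHom.coe_prodMap, Set.range_prodMap]
    exact ⟨ZMod.mem_range_scaleHom (congrArg Prod.fst hx),
      ZMod.mem_range_scaleHom (congrArg Prod.snd hx)⟩
  have hab : 2 ≤ a * b := by nlinarith
  constructor
  · have h := Ea.of_exact hexact Da.hasShortZeroSumSubseq (by omega) (k := 2 * b - 2)
      (Db.hasShortZeroSumSubseq.mono (by omega) le_rfl)
    refine (h.mono (le_of_eq ?_) le_rfl).hasZeroSumSubseq
    zify [show 2 ≤ 2 * b by omega, show 1 ≤ 2 * a by omega, show 1 ≤ 2 * (a * b) by omega]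
    ring
  · have h := Ea.of_exact hexact Ea (by omega) (k := 3 * b - 3) (Eb.mono (by omega) le_rfl)
    refine h.mono (le_of_eq ?_) (by rw [max_self, mul_comm])
    zify [show 3 ≤ 3 * b by omega, show 2 ≤ 3 * a by omega, show 2 ≤ 3 * (a * b) by omega]
    ring

theorem zmodSqBounds {m : ℕ} (hm : 0 < m) : ZModSqBounds m := by
  induction m using Nat.prime_composite_induction with
  | zero => omega
  | one => exact zmodSqBounds_one
  | prime p hp => exact zmodSqBounds_prime hp
  | composite a ha iha b hb ihb => exact (iha (by omega)).mul (ihb (by omega)) ha hb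

theorem hasZeroSumSubseq_zmod_prod (m n : ℕ) (hm : 0 < m) (hn : 0 < n) :
    HasZeroSumSubseq (ZMod m × ZMod (m * n)) (m + m * n - 1) := by
  have : NeZero n := ⟨hn.ne'⟩
  obtain ⟨Dm, Em⟩ := zmodSqBounds hm
  let f := (AddMonoidHom.id (ZMod m)).prodMap
    (ZMod.castHom (dvd_mul_right m n) (ZMod m)).toAddMonoidHom
  let φ := (AddMonoidHom.inr (ZMod m) (ZMod (m * n))).comp (ZMod.scaleHom m n)
  have hexact : ∀ x, f x = 0 → x ∈ Set.range φ := by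
    rintro ⟨x₁, x₂⟩ hx
    obtain ⟨y, hy⟩ := ZMod.mem_range_scaleHom (congrArg Prod.snd hx)
    exact ⟨y, Prod.ext (congrArg Prod.fst hx).symm hy⟩
  have hK := (hasZeroSumSubseq_card (ZMod n)).hasShortZeroSumSubseq
  rw [ZMod.card] at hK
  have h := Em.of_exact hexact Dm.hasShortZeroSumSubseq (by omega) (k := n - 1)
    (hK.mono (by omega) le_rfl)
  refine (h.mono (le_of_eq ?_) le_rfl).hasZeroSumSubseq
  zify [hn, show 1 ≤ 2 * m by omega, show 1 ≤ m + m * n by omega]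
  ring

theorem exists_zeroSumFree_zmod_prod (m n : ℕ) (hm : 0 < m) (hn : 0 < n) :
    ∃ S : Multiset (ZMod m × ZMod (m * n)), card S = m + m * n - 2 ∧
      ¬ ∃ T ≤ S, T ≠ 0 ∧ T.sum = 0 := by
  classical
  have hmn : 0 < m * n := Nat.mul_pos hm hn
  let A := replicate (m - 1) ((1, 0) : ZMod m × ZMod (m * n))
  let B := replicate (m * n - 1) ((0, 1) : ZMod m × ZMod (m * n))
  refine ⟨A + B, by rw [card_add, card_replicate, card_replicate]; omega, ?_⟩
  rintro ⟨T, hT, hT0, hTsum⟩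
  obtain ⟨i, hi, hTA⟩ := le_replicate_iff.mp (tsub_tsub_le : T - (T - A) ≤ A)
  obtain ⟨j, hj, hTB⟩ := le_replicate_iff.mp (tsub_le_iff_left.mpr hT : T - A ≤ B)
  have hsplit : T = replicate i (1, 0) + replicate j (0, 1) := by
    rw [← hTA, ← hTB, tsub_add_cancel_of_le tsub_le_self]
  rw [hsplit, sum_add, sum_replicate, sum_replicate] at hTsum
  have hi0 : i = 0 := Nat.eq_zero_of_dvd_of_lt
    ((ZMod.natCast_eq_zero_iff i m).mp (by simpa using congrArg Prod.fst hTsum)) (by omega)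
  have hj0 : j = 0 := Nat.eq_zero_of_dvd_of_lt
    ((ZMod.natCast_eq_zero_iff j (m * n)).mp (by simpa using congrArg Prod.snd hTsum)) (by omega)
  exact hT0 (by simp [hsplit, hi0, hj0])

/-- For `G = C_m ⊕ C_{mn}`, the Davenport constant is `D(G) = m + mn - 1`:
every sequence of length at least `m + mn - 1` has a nonempty zero-sum subsequence, and
there is a sequence of length `m + mn - 2` with none. -/
theorem stmt_9 (m n : ℕ) (hm : 0 < m) (hn : 0 < n) :
    (∀ S : Multiset (ZMod m × ZMod (m * n)), m + m * n - 1 ≤ S.card →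
      ∃ T ≤ S, T ≠ 0 ∧ T.sum = 0) ∧
    (∃ S : Multiset (ZMod m × ZMod (m * n)), S.card = m + m * n - 2 ∧
      ¬ ∃ T ≤ S, T ≠ 0 ∧ T.sum = 0) :=
  ⟨hasZeroSumSubseq_zmod_prod m n hm hn, exists_zeroSumFree_zmod_prod m n hm hn⟩
end

section
/- Let n be a positive integer and let S be a sequence over the cyclic group C_n of length n − 1. Then S has no nonempty zero-sum subsequence if and only if S = e^{n−1} for some e ∈ C_n that generates C_n. -/
/-!
Write a zero-sum-free sequence of length `|G| - 1` as a list `a, b, …`. Its prefix sums are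
nonzero and pairwise distinct (the difference of two of them is the sum of a nonempty block), so
they are exactly the nonzero elements of `G`. In particular `b ≠ 0` is a prefix sum; it cannot be
one of length `≥ 2`, since removing `b` from that prefix would leave a zero sum, so `b = a`.
Hence the sequence is `a^{|G|-1}`, and `a^m` is zero-sum-free exactly when `m < ord a`; in `C_n`
this means that `a` generates.
-/

open Multiset

section ZeroSumFree

variable {G : Type*}

def ZeroSumFree [AddCommMonoid G] (S : Multiset G) : Prop :=
  ∀ T ≤ S, T ≠ 0 → T.sum ≠ 0

theorem zeroSumFree_iff_not_exists [AddCommMonoid G] (S : Multiset G) :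
    ZeroSumFree S ↔ ¬ ∃ T ≤ S, T ≠ 0 ∧ T.sum = 0 := by
  simp [ZeroSumFree]

theorem ZeroSumFree.sum_ne_zero_of_sublist [AddCommMonoid G] {L l : List G}
    (hL : ZeroSumFree (L : Multiset G)) (hl : l.Sublist L) (hl0 : l ≠ []) : l.sum ≠ 0 := by
  simpa using hL l hl.subperm (by simpa using hl0)

theorem zeroSumFree_replicate_iff [AddCommMonoid G] {e : G} (he : IsOfFinAddOrder e) (m : ℕ) :
    ZeroSumFree (replicate m e) ↔ m < addOrderOf e := by
  constructor
  · intro hS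
    by_contra! hle
    refine hS (replicate (addOrderOf e) e) ((replicate_le_replicate e).2 hle)
      (by rw [Ne, ← card_eq_zero, card_replicate]; exact he.addOrderOf_pos.ne') ?_
    rw [sum_replicate, addOrderOf_nsmul_eq_zero]
  · rintro hm T hT hT0 hsum
    obtain ⟨k, hk, rfl⟩ := le_replicate_iff.1 hT
    have hk0 : k ≠ 0 := by rintro rfl; exact hT0 (replicate_zero e)
    rw [sum_replicate] at hsum
    have := Nat.le_of_dvd (Nat.pos_of_ne_zero hk0) (addOrderOf_dvd_of_nsmul_eq_zero hsum)
    omega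

variable [AddCommGroup G]

theorem ZeroSumFree.injOn_prefix_sum {L : List G} (hL : ZeroSumFree (L : Multiset G)) :
    Set.InjOn (fun k ↦ (L.take (k + 1)).sum) (Set.Iio L.length) := by
  suffices h : ∀ j k, j < k → k < L.length → (L.take (j + 1)).sum ≠ (L.take (k + 1)).sum by
    intro j hj k hk heq
    rcases lt_trichotomy j k with hjk | hjk | hjk
    · exact absurd heq (h j k hjk hk)
    · exact hjk
    · exact absurd heq.symm (h k j hjk hj)
  intro j k hjk hk heq
  set seg := (L.drop (j + 1)).take (k - j)
  have hsplit : L.take (k + 1) = L.take (j + 1) ++ seg := by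
    rw [← List.take_add]; congr 1; omega
  have hseg : seg.Sublist L := (List.take_sublist _ _).trans (List.drop_sublist _ _)
  have hseg0 : seg ≠ [] := by
    rw [← List.length_pos_iff]; simp only [seg, List.length_take, List.length_drop]; omega
  apply hL.sum_ne_zero_of_sublist hseg hseg0
  rw [hsplit, List.sum_append] at heq
  simpa using heq.symm

theorem ZeroSumFree.prefix_sum_ne_zero {L : List G} (hL : ZeroSumFree (L : Multiset G)) {k : ℕ}
    (hk : k < L.length) : (L.take (k + 1)).sum ≠ 0 :=
  hL.sum_ne_zero_of_sublist (List.take_sublist _ _)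
    (List.ne_nil_of_length_pos (by rw [List.length_take]; omega))

theorem ZeroSumFree.exists_prefix_sum_eq [Fintype G] {L : List G}
    (hL : ZeroSumFree (L : Multiset G)) (hlen : L.length + 1 = Fintype.card G) {g : G}
    (hg : g ≠ 0) : ∃ k < L.length, (L.take (k + 1)).sum = g := by
  classical
  have himage : (Finset.range L.length).image (fun k ↦ (L.take (k + 1)).sum) =
      Finset.univ.erase 0 := by
    apply Finset.eq_of_subset_of_card_le
    · intro x hx
      obtain ⟨k, hk, rfl⟩ := Finset.mem_image.1 hx
      exact Finset.mem_erase.2 ⟨hL.prefix_sum_ne_zero (Finset.mem_range.1 hk), Finset.mem_univ _⟩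
    · rw [Finset.card_image_of_injOn (by simpa using hL.injOn_prefix_sum),
        Finset.card_erase_of_mem (Finset.mem_univ _), Finset.card_univ, Finset.card_range]
      omega
  simpa using himage.ge (Finset.mem_erase.2 ⟨hg, Finset.mem_univ g⟩)

theorem ZeroSumFree.eq_replicate [Fintype G] {S : Multiset G} (hS : ZeroSumFree S)
    (hcard : S.card + 1 = Fintype.card G) : ∃ e, S = replicate S.card e := by
  classical
  rcases S.empty_or_exists_mem with rfl | ⟨a, ha⟩
  · exact ⟨0, rfl⟩
  refine ⟨a, Multiset.eq_replicate.2 ⟨rfl, fun b hb ↦ ?_⟩⟩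
  by_contra hba
  have hb0 : b ≠ 0 := by simpa using hS {b} (singleton_le.2 hb) (singleton_ne_zero b)
  obtain ⟨L, hL⟩ : ∃ L : List G, (L : Multiset G) = (S.erase a).erase b :=
    Quotient.exists_rep _
  have hS' : ((a :: b :: L : List G) : Multiset G) = S := by
    rw [← cons_coe, ← cons_coe, hL, cons_erase ((mem_erase_of_ne hba).2 hb),
      cons_erase ha]
  rw [← hS'] at hS hcard
  obtain ⟨k, hk, hkb⟩ := hS.exists_prefix_sum_eq (by simpa using hcard) hb0
  rcases k with _ | m
  · exact hba (by simpa using hkb.symm)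
  · apply hS.sum_ne_zero_of_sublist (((List.take_sublist m L).cons b).cons_cons a)
      (List.cons_ne_nil _ _)
    simp only [List.take_succ_cons, List.sum_cons] at hkb
    simpa [add_left_comm a b] using hkb

end ZeroSumFree

/-- A sequence `S` over `C_n` of length `n - 1` has no nonempty zero-sum
subsequence if and only if `S = e^{n-1}` for a generator `e` of `C_n`. -/
theorem stmt_13 (n : ℕ) (hn : 0 < n) (S : Multiset (ZMod n)) (hcard : S.card = n - 1) :
    (¬ ∃ T ≤ S, T ≠ 0 ∧ T.sum = 0) ↔
    ∃ e : ZMod n, addOrderOf e = n ∧ S = Multiset.replicate (n - 1) e := by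
  have : NeZero n := ⟨hn.ne'⟩
  have hgen : ∀ e : ZMod n, ZeroSumFree (replicate (n - 1) e) ↔ addOrderOf e = n := fun e ↦ by
    have hle : addOrderOf e ≤ n := by simpa using addOrderOf_le_card (x := e)
    rw [zeroSumFree_replicate_iff (isOfFinAddOrder_of_finite e)]
    omega
  rw [← zeroSumFree_iff_not_exists]
  constructor
  · intro hS
    obtain ⟨e, hSe⟩ := hS.eq_replicate (by rw [hcard, ZMod.card]; omega)
    rw [hcard] at hSe
    exact ⟨e, (hgen e).1 (hSe ▸ hS), hSe⟩
  · rintro ⟨e, he, rfl⟩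
    exact (hgen e).2 he
end

section
/- Let n be a positive integer and let S be a sequence over the cyclic group C_n of length 2n − 2. Then S has no zero-sum subsequence of length n if and only if S = g^{n−1} · (g + e)^{n−1} for some g, e ∈ C_n with e a generator of C_n. -/
/-!
A sequence over a finite abelian group of order `n` with at least `n` terms, each occurring at most
`k` times, has a nonempty zero-sum subsequence with at most `k` terms: peeling off one copy of each
value and applying Scherk's theorem shows that otherwise the sums of subsequences with at most `k`
terms would take more than `n` values.

For the hard direction, translate `S` so that its most frequent term is `0`, occurring `h` times,
and let `T` be the other terms. Padding with zeros shows that `T` has no zero-sum subsequence whose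
length lies in `[n - h, n]`. Removing a short zero-sum block from `T` only extends this window
downwards, so by induction `h = n - 1` and `T` is a zero-sum free sequence of length `n - 1`. Such a
sequence is `e ^ (n - 1)` with `e` of order `n`: if `a ≠ b` were terms of `T`, the subsums of
`T - {a, b}` would miss `-a`, `-b` and `-(a + b)`, whereas the subsums of a zero-sum free sequence
of length `n - 3` take at least `n - 2` values.
-/

open Multiset
open scoped Pointwise Finset

section Scherk

variable {G : Type*} [AddCommGroup G] [DecidableEq G]

theorem Finset.eq_singleton_zero_of_add_mem {s t : Finset G} (hs : 0 ∈ s) (ht : 0 ∈ t)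
    (hzero : ∀ a ∈ s, ∀ b ∈ t, a + b = 0 → a = 0) (hadd : ∀ a ∈ s, ∀ b ∈ t, a + b ∈ s) :
    t = {0} := by
  refine Finset.eq_singleton_iff_unique_mem.2 ⟨ht, fun b hb => ?_⟩
  have himage : s.image (· + b) = s :=
    Finset.eq_of_subset_of_card_le (Finset.image_subset_iff.2 fun a ha => hadd a ha b hb)
      (Finset.card_image_of_injective s (add_left_injective b)).ge
  obtain ⟨a, ha, hab⟩ := Finset.mem_image.1 (himage.symm ▸ hs)
  rw [hzero a ha b hb hab, zero_add] at hab
  exact hab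

/-- Scherk's theorem. -/
theorem Finset.card_add_card_le_card_add_add_one {s t : Finset G} (hs : 0 ∈ s) (ht : 0 ∈ t)
    (hzero : ∀ a ∈ s, ∀ b ∈ t, a + b = 0 → a = 0) : #s + #t ≤ #(s + t) + 1 := by
  induction hk : #t using Nat.strong_induction_on generalizing s t with
  | _ k ih =>
  subst hk
  by_cases hadd : ∀ a ∈ s, ∀ b ∈ t, a + b ∈ s
  · simp [Finset.eq_singleton_zero_of_add_mem hs ht hzero hadd]
  push Not at hadd
  obtain ⟨e, he, b, hb, heb⟩ := hadd
  have hlt : #(t ∩ (-e +ᵥ s)) < #t := by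
    refine Finset.card_lt_card (Finset.ssubset_iff_subset_ne.2 ⟨Finset.inter_subset_left, ?_⟩)
    intro h
    obtain ⟨c, hc, hcb⟩ := Finset.mem_vadd_finset.1 (Finset.mem_inter.1 (h ▸ hb)).2
    exact heb (by rwa [← hcb, vadd_eq_add, add_neg_cancel_left])
  have hzero' : ∀ a ∈ s ∪ (e +ᵥ t), ∀ b ∈ t ∩ (-e +ᵥ s), a + b = 0 → a = 0 := by
    intro a ha b hb hab
    obtain ⟨hbt, hbs⟩ := Finset.mem_inter.1 hb
    obtain ⟨c, hc, rfl⟩ := Finset.mem_vadd_finset.1 hbs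
    rcases Finset.mem_union.1 ha with ha | ha
    · exact hzero a ha _ hbt hab
    obtain ⟨d, hd, rfl⟩ := Finset.mem_vadd_finset.1 ha
    simp only [vadd_eq_add] at hab ⊢
    obtain rfl : c = 0 := hzero c hc d hd (by rw [← hab]; abel)
    obtain rfl : e = 0 := hzero e he _ hbt (by simp)
    simpa using hab
  calc #s + #t = #(s ∪ (e +ᵥ t)) + #(t ∩ (-e +ᵥ s)) :=
        (Finset.addDysonETransform.card e (s, t)).symm
    _ ≤ #((s ∪ (e +ᵥ t)) + (t ∩ (-e +ᵥ s))) + 1 :=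
        ih _ hlt (Finset.mem_union_left _ hs)
          (Finset.mem_inter.2 ⟨ht, Finset.mem_vadd_finset.2 ⟨e, he, by simp⟩⟩) hzero' rfl
    _ ≤ #(s + t) + 1 :=
        Nat.add_le_add_right (Finset.card_le_card (Finset.addDysonETransform.subset e (s, t))) 1

end Scherk

namespace Multiset

theorem le_replicate_add_replicate {α : Type*} [DecidableEq α] {T : Multiset α} {a b : α} {i j : ℕ}
    (h : T ≤ replicate i a + replicate j b) :
    ∃ i' ≤ i, ∃ j' ≤ j, T = replicate i' a + replicate j' b := by
  obtain ⟨i', hi, hi'⟩ := le_replicate_iff.1 (Multiset.inter_le_right (s := T) (t := replicate i a))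
  obtain ⟨j', hj, hj'⟩ := le_replicate_iff.1
    (Multiset.sub_le_iff_le_add.2 (add_comm (replicate i a) _ ▸ h))
  exact ⟨i', hi, j', hj, by rw [← sub_add_inter T (replicate i a), hi', hj', add_comm]⟩

theorem add_singleton_le_of_le_sub_dedup {α : Type*} [DecidableEq α] {T U : Multiset α} {b : α}
    (hU : U ≤ T - T.dedup) (hb : b ∈ T) : U + {b} ≤ T :=
  Multiset.sub_add_cancel (dedup_le T) ▸ add_le_add hU (singleton_le.2 (mem_dedup.2 hb))

section ZeroSumFree

variable {G : Type*} [AddCommGroup G]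

def IsZeroSumFree (T : Multiset G) : Prop := ∀ U ≤ T, U.sum = 0 → U = 0

variable [Fintype G]

theorem IsZeroSumFree.addOrderOf_eq_card {e : G}
    (h : IsZeroSumFree (replicate (Fintype.card G - 1) e)) : addOrderOf e = Fintype.card G := by
  refine (addOrderOf_eq_iff Fintype.card_pos).2 ⟨card_nsmul_eq_zero, fun m hm hm0 hme => ?_⟩
  have := congrArg card (h (replicate m e) ((replicate_le_replicate e).2 (by omega))
    (by simpa using hme))
  simp only [card_replicate, card_zero] at this
  omega

theorem exists_zero_sum_of_map_sub {S : Multiset G} (c : G)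
    (h : ∃ T ≤ S.map (· - c), T.sum = 0 ∧ card T = Fintype.card G) :
    ∃ T ≤ S, T.sum = 0 ∧ card T = Fintype.card G := by
  obtain ⟨T, hT, hsum, hcard⟩ := h
  refine ⟨T.map (· + c), ?_, ?_, by simpa using hcard⟩
  · simpa [map_map, Function.comp_def] using map_le_map (f := (· + c)) hT
  · simp [sum_map_add, hsum, hcard, card_nsmul_eq_zero]

end ZeroSumFree

section Subsums

variable {G : Type*} [AddCommGroup G] [DecidableEq G]

def subsumsOfCardLE (T : Multiset G) (k : ℕ) : Finset G :=
  ((T.powerset.filter fun U => card U ≤ k).map Multiset.sum).toFinset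

theorem mem_subsumsOfCardLE {T : Multiset G} {k : ℕ} {x : G} :
    x ∈ T.subsumsOfCardLE k ↔ ∃ U ≤ T, card U ≤ k ∧ U.sum = x := by
  simp [subsumsOfCardLE, and_assoc]

theorem subsumsOfCardLE_sub_dedup_add_subset (T : Multiset G) (k : ℕ) :
    (T - T.dedup).subsumsOfCardLE k + insert 0 T.toFinset ⊆ T.subsumsOfCardLE (k + 1) := by
  intro x hx
  obtain ⟨a, ha, b, hb, rfl⟩ := Finset.mem_add.1 hx
  obtain ⟨U, hU, hUk, rfl⟩ := mem_subsumsOfCardLE.1 ha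
  rcases Finset.mem_insert.1 hb with rfl | hb
  · exact mem_subsumsOfCardLE.2 ⟨U, hU.trans (Multiset.sub_le_self _ _), by omega, by simp⟩
  · exact mem_subsumsOfCardLE.2 ⟨U + {b}, add_singleton_le_of_le_sub_dedup hU (mem_toFinset.1 hb),
      by simpa using hUk, by simp⟩

theorem card_add_one_le_card_subsumsOfCardLE {k : ℕ} {T : Multiset G}
    (hcount : ∀ x, count x T ≤ k) (hfree : ∀ U ≤ T, card U ≤ k → U.sum = 0 → U = 0) :
    card T + 1 ≤ #(T.subsumsOfCardLE k) := by
  induction k generalizing T with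
  | zero =>
    obtain rfl : T = 0 := eq_zero_of_forall_notMem fun x hx => by
      simpa using (count_pos.2 hx).trans_le (hcount x)
    exact Finset.card_pos.2 ⟨0, mem_subsumsOfCardLE.2 ⟨0, le_rfl, by simp⟩⟩
  | succ k ih =>
    have hT' : T - T.dedup ≤ T := Multiset.sub_le_self _ _
    have h0 : (0 : G) ∉ T := fun h => by
      simpa using hfree {0} (singleton_le.2 h) (by simp) (by simp)
    have hcount' : ∀ x, count x (T - T.dedup) ≤ k := fun x => by
      rw [count_sub, count_dedup]
      split_ifs with hx
      · have := hcount x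
        omega
      · simp [count_eq_zero.2 hx]
    have hzero : ∀ a ∈ (T - T.dedup).subsumsOfCardLE k, ∀ b ∈ insert 0 T.toFinset,
        a + b = 0 → a = 0 := by
      intro a ha b hb hab
      obtain ⟨U, hU, hUk, rfl⟩ := mem_subsumsOfCardLE.1 ha
      rcases Finset.mem_insert.1 hb with rfl | hb
      · simpa using hab
      · simpa using hfree _ (add_singleton_le_of_le_sub_dedup hU (mem_toFinset.1 hb))
          (by simpa using hUk) (by simpa using hab)
    have hrec := ih hcount' fun U hU hUk => hfree U (hU.trans hT') (by omega)
    have hscherk := Finset.card_add_card_le_card_add_add_one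
      (mem_subsumsOfCardLE.2 ⟨0, zero_le _, by simp⟩) (Finset.mem_insert_self 0 _) hzero
    have hins : #(insert 0 T.toFinset) = card T.dedup + 1 := by
      rw [Finset.card_insert_of_notMem (by simpa using h0), card_toFinset]
    have hcardT : card T = card (T - T.dedup) + card T.dedup := by
      rw [← card_add, Multiset.sub_add_cancel (dedup_le T)]
    have := Finset.card_le_card (subsumsOfCardLE_sub_dedup_add_subset T k)
    omega

variable [Fintype G]

theorem exists_zero_sum_card_le_of_count_le {k : ℕ} {T : Multiset G}
    (hcount : ∀ x, count x T ≤ k) (hT : Fintype.card G ≤ card T) :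
    ∃ U ≤ T, U ≠ 0 ∧ card U ≤ k ∧ U.sum = 0 := by
  by_contra! h
  have := card_add_one_le_card_subsumsOfCardLE hcount fun U hU hUk hsum =>
    of_not_not fun hU0 => h U hU hU0 hUk hsum
  have := Finset.card_le_univ (T.subsumsOfCardLE k)
  omega

theorem IsZeroSumFree.eq_of_mem {T : Multiset G} (hT : IsZeroSumFree T)
    (hcard : card T + 1 = Fintype.card G) {a b : G} (ha : a ∈ T) (hb : b ∈ T) : a = b := by
  by_contra hab
  have hpair : ({a, b} : Multiset G) ≤ T := by
    rw [← cons_erase ha]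
    exact cons_le_cons a (singleton_le.2 ((mem_erase_of_ne (Ne.symm hab)).2 hb))
  set D := T - {a, b}
  have hD : D + {a, b} = T := Multiset.sub_add_cancel hpair
  have hmiss : ∀ V ≤ ({a, b} : Multiset G), V ≠ 0 → -V.sum ∉ D.subsumsOfCardLE (card D) := by
    intro V hV hV0 hmem
    obtain ⟨U, hU, -, hUV⟩ := mem_subsumsOfCardLE.1 hmem
    have := hT (U + V) (hD ▸ add_le_add hU hV) (by simp [hUV])
    exact hV0 (add_eq_zero.1 this).2
  have ha0 : a ≠ 0 := fun h => by simpa using hT {a} (singleton_le.2 ha) (by simp [h])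
  have hb0 : b ≠ 0 := fun h => by simpa using hT {b} (singleton_le.2 hb) (by simp [h])
  have hdisj : Disjoint (D.subsumsOfCardLE (card D)) {-a, -b, -(a + b)} := by
    simp only [Finset.disjoint_insert_right, Finset.disjoint_singleton_right]
    refine ⟨by simpa using hmiss {a} (by simp) (by simp), ?_, ?_⟩
    · simpa using hmiss {b} (by simp) (by simp)
    · simpa using hmiss {a, b} le_rfl (by simp)
  have htriple : #({-a, -b, -(a + b)} : Finset G) = 3 := by
    rw [Finset.card_insert_of_notMem, Finset.card_pair] <;> simp [hab, ha0, hb0]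
  have hfreeD : ∀ U ≤ D, card U ≤ card D → U.sum = 0 → U = 0 := fun U hU _ =>
    hT U (hU.trans (Multiset.sub_le_self _ _))
  have hbig := card_add_one_le_card_subsumsOfCardLE (fun x => count_le_card x D) hfreeD
  have hcardD : card T = card D + 2 := by rw [← hD, card_add]; rfl
  have := Finset.card_le_univ (D.subsumsOfCardLE (card D) ∪ {-a, -b, -(a + b)})
  rw [Finset.card_union_of_disjoint hdisj, htriple] at this
  omega

theorem IsZeroSumFree.exists_eq_replicate {T : Multiset G} (hT : IsZeroSumFree T)
    (hcard : card T + 1 = Fintype.card G) :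
    ∃ e, addOrderOf e = Fintype.card G ∧ T = replicate (Fintype.card G - 1) e := by
  obtain ⟨e, he⟩ : ∃ e, ∀ b ∈ T, b = e := by
    rcases empty_or_exists_mem T with rfl | ⟨e, he⟩
    · exact ⟨0, by simp⟩
    · exact ⟨e, fun b hb => hT.eq_of_mem hcard hb he⟩
  have hTe : T = replicate (Fintype.card G - 1) e := eq_replicate.2 ⟨by omega, he⟩
  exact ⟨e, IsZeroSumFree.addOrderOf_eq_card (hTe ▸ hT), hTe⟩

theorem exists_eq_replicate_of_no_zero_sum_card_mem_Icc {T : Multiset G} {a : ℕ}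
    (hcount : ∀ x, count x T + a ≤ Fintype.card G)
    (hwin : ∀ U ≤ T, U.sum = 0 → a ≤ card U → Fintype.card G < card U)
    (hcard : card T + 2 = Fintype.card G + a) :
    ∃ e, addOrderOf e = Fintype.card G ∧ T = replicate (Fintype.card G - 1) e := by
  induction hN : card T using Nat.strong_induction_on generalizing T a with
  | _ N ih =>
  subst hN
  have ha : 1 ≤ a := by
    by_contra! ha
    simpa using hwin 0 (zero_le T) sum_zero (by omega)
  rcases lt_or_ge (card T) (Fintype.card G) with hlt | hge
  · refine IsZeroSumFree.exists_eq_replicate (fun U hU hsum => ?_) (by omega)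
    by_contra hU0
    have := hwin U hU hsum (by have := card_pos.2 hU0; omega)
    have := card_le_card hU
    omega
  obtain ⟨B, hB, hB0, hBk, hBsum⟩ := exists_zero_sum_card_le_of_count_le
    (k := Fintype.card G - a) (fun x => by have := hcount x; omega) hge
  have hBpos := card_pos.2 hB0
  have hBa : card B < a := by
    by_contra! h
    have := hwin B hB hBsum h
    omega
  have hTB : card (T - B) = card T - card B := card_sub hB
  have hwin' : ∀ U ≤ T - B, U.sum = 0 → a - card B ≤ card U → Fintype.card G < card U := by
    intro U hU hsum haU
    by_cases hUB : card U + card B ≤ Fintype.card G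
    · have hle : U + B ≤ T := Multiset.sub_add_cancel hB ▸ add_le_add hU le_rfl
      have := hwin (U + B) hle (by simp [hsum, hBsum]) (by rw [card_add]; omega)
      rw [card_add] at this
      omega
    · exact hwin U (hU.trans (Multiset.sub_le_self _ _)) hsum (by omega)
  obtain ⟨e, -, hTe⟩ := ih (card (T - B)) (by omega)
    (fun x => by have := hcount x; have := count_le_of_le x (Multiset.sub_le_self T B); omega)
    hwin' (by omega) rfl
  have := hcount e
  have := count_le_of_le e (Multiset.sub_le_self T B)
  rw [hTe, count_replicate_self] at this
  omega

theorem exists_eq_replicate_of_count_le_count_zero {S : Multiset G}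
    (hS : card S = 2 * Fintype.card G - 2)
    (h : ¬ ∃ T ≤ S, T.sum = 0 ∧ card T = Fintype.card G) (hmax : ∀ x, count x S ≤ count 0 S) :
    ∃ e, addOrderOf e = Fintype.card G ∧
      S = replicate (Fintype.card G - 1) 0 + replicate (Fintype.card G - 1) e := by
  set n := Fintype.card G
  have hST : S = replicate (count 0 S) 0 + S.filter (· ≠ 0) := by
    rw [← filter_eq', filter_add_not]
  generalize S.filter (· ≠ 0) = T at hST
  generalize count 0 S = k at hST hmax
  have hk : k < n := by
    by_contra! hk
    exact h ⟨replicate n 0, hST ▸ ((replicate_le_replicate 0).2 hk).trans (le_add_right _ _),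
      by simp, by simp⟩
  have hcount : ∀ x, count x T + (n - k) ≤ n := fun x => by
    have := (count_le_of_le x (hST ▸ le_add_left _ _ : T ≤ S)).trans (hmax x)
    omega
  have hwin : ∀ U ≤ T, U.sum = 0 → n - k ≤ card U → n < card U := by
    intro U hU hsum hkU
    by_contra! hUn
    refine h ⟨replicate (n - card U) 0 + U, ?_, by simp [hsum], by simp; omega⟩
    exact hST ▸ add_le_add ((replicate_le_replicate 0).2 (by omega)) hU
  have hcardST : card S = k + card T := by rw [hST, card_add, card_replicate]
  obtain ⟨e, he, hTe⟩ := exists_eq_replicate_of_no_zero_sum_card_mem_Icc hcount hwin (by omega)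
  have hkn : k = n - 1 := by
    rw [hTe, card_replicate] at hcardST
    omega
  exact ⟨e, he, hST.trans (by rw [hkn, hTe])⟩

theorem exists_eq_replicate_add_replicate_of_no_zero_sum {S : Multiset G}
    (hS : card S = 2 * Fintype.card G - 2)
    (h : ¬ ∃ T ≤ S, T.sum = 0 ∧ card T = Fintype.card G) :
    ∃ g e, addOrderOf e = Fintype.card G ∧
      S = replicate (Fintype.card G - 1) g + replicate (Fintype.card G - 1) (g + e) := by
  obtain ⟨g, hg⟩ := Finite.exists_max fun x => count x S
  have hcount : ∀ x, count x (S.map (· - g)) = count (x + g) S := fun x => by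
    simpa using count_map_eq_count' (· - g) S (sub_left_injective) (x + g)
  obtain ⟨e, he, hSg⟩ := exists_eq_replicate_of_count_le_count_zero (S := S.map (· - g))
    (by simpa using hS) (fun h' => h (exists_zero_sum_of_map_sub g h'))
    (fun x => by simpa [hcount] using hg (x + g))
  refine ⟨g, e, he, ?_⟩
  have hS' : S = (S.map (· - g)).map (· + g) := by simp [map_map]
  rw [hS', hSg]
  simp [map_replicate, add_comm]

theorem no_zero_sum_replicate_add_replicate {g e : G} (he : addOrderOf e = Fintype.card G) :
    ¬ ∃ T ≤ replicate (Fintype.card G - 1) g + replicate (Fintype.card G - 1) (g + e),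
      T.sum = 0 ∧ card T = Fintype.card G := by
  rintro ⟨T, hT, hsum, hcard⟩
  obtain ⟨i, hi, j, hj, rfl⟩ := le_replicate_add_replicate hT
  rw [card_add, card_replicate, card_replicate] at hcard
  have hje : j • e = 0 := by
    rw [← hsum, sum_add, sum_replicate, sum_replicate, nsmul_add, ← add_assoc, ← add_nsmul,
      hcard, card_nsmul_eq_zero, zero_add]
  have := Fintype.card_pos (α := G)
  exact nsmul_ne_zero_of_lt_addOrderOf (by omega) (by omega) hje

end Subsums

end Multiset

/-- A sequence `S` over `C_n` of length `2n - 2` has no zero-sum subsequence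
of length `n` if and only if `S = g^{n-1} (g+e)^{n-1}` for some `g, e ∈ C_n` with `e` a
generator of `C_n`. -/
theorem stmt_14 (n : ℕ) (hn : 0 < n) (S : Multiset (ZMod n))
    (hcard : S.card = 2 * n - 2) :
    (¬ ∃ T ≤ S, T.sum = 0 ∧ Multiset.card T = n) ↔
    ∃ g e : ZMod n, addOrderOf e = n ∧
      S = Multiset.replicate (n - 1) g + Multiset.replicate (n - 1) (g + e) := by
  have : NeZero n := ⟨hn.ne'⟩
  have hard := Multiset.exists_eq_replicate_add_replicate_of_no_zero_sum (S := S)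
  have easy := @Multiset.no_zero_sum_replicate_add_replicate (ZMod n)
  simp only [ZMod.card] at hard easy
  refine ⟨hard hcard, ?_⟩
  rintro ⟨g, e, he, rfl⟩
  exact easy he
end

section
/- Let G be a finite abelian group, let g ∈ G, and let S be a sequence over G such that the multiplicity of g in S is at least ⌊(exp(G) − 1)/2⌋ and S has no zero-sum subsequence of length exp(G). Then S has a subsequence T of length at least |S| − exp(G) + 1 such that the translated sequence (−g) + T has no short zero-sum subsequence. -/
/-- If `S` is a sequence over a finite abelian group `G` with
`v_g(S) ≥ ⌊(exp(G) - 1)/2⌋` and no zero-sum subsequence of length `exp(G)`, then `S` has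
a subsequence `T` with `|T| ≥ |S| - exp(G) + 1` such that `(-g) + T` has no short
zero-sum subsequence. -/
theorem stmt_17 (G : Type*) [AddCommGroup G] [Fintype G] [DecidableEq G] (g : G) (S : Multiset G)
    (hcount : (AddMonoid.exponent G - 1) / 2 ≤ S.count g)
    (hS : ¬ ∃ T ≤ S, T.sum = 0 ∧ Multiset.card T = AddMonoid.exponent G) :
    ∃ T ≤ S, (Multiset.card S : ℤ) - AddMonoid.exponent G + 1 ≤ (Multiset.card T : ℤ) ∧
      ¬ ∃ U ≤ Multiset.map (fun x => x - g) T,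
          U ≠ 0 ∧ U.sum = 0 ∧ Multiset.card U ≤ AddMonoid.exponent G := by
  classical
  set n := AddMonoid.exponent G with hn
  set k := S.count g with hk
  set S' := S.filter (fun x => x ≠ g) with hS'def
  have hS'le : S' ≤ S := Multiset.filter_le _ _
  have hcountS' : S'.count g = 0 := by
    simp [hS'def, Multiset.count_filter]
  have hcardS' : Multiset.card S' + k = Multiset.card S := by
    have h := Multiset.filter_add_not (fun x => x ≠ g) S
    have h2 : S.filter (fun x => ¬ x ≠ g) = Multiset.replicate k g := by
      rw [hk]
      simp only [not_ne_iff]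
      exact Multiset.filter_eq' S g
    rw [h2] at h
    have := congrArg Multiset.card h
    simpa using this
  have hng : n • g = 0 := AddMonoid.exponent_nsmul_eq_zero g
  -- Key lemma: any U ≤ S' with sum U = |U| • g and |U| ≤ n satisfies |U| + k < n
  have key : ∀ U : Multiset G, U ≤ S' → U.sum = (Multiset.card U) • g →
      Multiset.card U ≤ n → Multiset.card U + k < n := by
    intro U hUle hUsum hUcard
    by_contra h
    push_neg at h
    apply hS
    refine ⟨U + Multiset.replicate (n - Multiset.card U) g, ?_, ?_, ?_⟩
    · rw [Multiset.le_iff_count]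
      intro a
      rw [Multiset.count_add, Multiset.count_replicate]
      by_cases ha : a = g
      · subst ha
        have h0 : U.count a = 0 :=
          Nat.le_zero.mp (hcountS' ▸ Multiset.count_le_of_le a hUle)
        rw [if_pos rfl, h0, zero_add, ← hk]
        omega
      · rw [if_neg (fun h => ha h.symm), add_zero]
        exact le_trans (Multiset.count_le_of_le a hUle) (Multiset.count_le_of_le a hS'le)
    · rw [Multiset.sum_add, hUsum, Multiset.sum_replicate, ← add_nsmul,
        Nat.add_sub_cancel' hUcard]
      exact hng
    · simp only [Multiset.card_add, Multiset.card_replicate]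
      omega
  -- choose a maximal candidate U₀
  let C : Finset (Multiset G) := (S'.powerset.toFinset).filter
      (fun U => U.sum = (Multiset.card U) • g ∧ Multiset.card U ≤ n)
  have hmemC : ∀ U : Multiset G, U ∈ C ↔
      U ≤ S' ∧ U.sum = (Multiset.card U) • g ∧ Multiset.card U ≤ n := by
    intro U
    simp [C, Multiset.mem_powerset]
  have hCne : C.Nonempty := ⟨0, by simp [hmemC]⟩
  obtain ⟨U₀, hU₀C, hU₀max⟩ := C.exists_max_image Multiset.card hCne
  rw [hmemC] at hU₀C
  obtain ⟨hU₀le, hU₀sum, hU₀card⟩ := hU₀C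
  have hU₀key : Multiset.card U₀ + k < n := key U₀ hU₀le hU₀sum hU₀card
  refine ⟨S' - U₀, le_trans (Multiset.sub_le_self _ _) hS'le, ?_, ?_⟩
  · have hTcard : Multiset.card (S' - U₀) + Multiset.card U₀ = Multiset.card S' := by
      rw [← Multiset.card_add, tsub_add_cancel_of_le hU₀le]
    omega
  · rintro ⟨V, hVle, hVne, hVsum, hVcard⟩
    set V' := V.map (fun x => x + g) with hV'def
    have hV'le : V' ≤ S' - U₀ := by
      have := Multiset.map_le_map (f := fun x => x + g) hVle
      rwa [Multiset.map_map, show ((fun x => x + g) ∘ fun x => x - g) = id by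
        funext x; simp, Multiset.map_id] at this
    have hV'card : Multiset.card V' = Multiset.card V := by
      simp [hV'def]
    have hV'sum : V'.sum = (Multiset.card V') • g := by
      rw [hV'def]
      have h1 : (V.map (fun x => x + g)).sum = (V.map (fun x => x)).sum + (V.map (fun _ => g)).sum :=
        Multiset.sum_map_add
      rw [h1, Multiset.map_id', hVsum, zero_add, Multiset.map_const', Multiset.sum_replicate,
        Multiset.card_map]
    have hV'leS' : V' ≤ S' := le_trans hV'le (Multiset.sub_le_self _ _)
    have hV'key : Multiset.card V' + k < n :=
      key V' hV'leS' hV'sum (by rw [hV'card]; exact hVcard)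
    have hV'pos : 0 < Multiset.card V' := by
      rw [hV'card]
      exact Multiset.card_pos.mpr hVne
    -- the combined candidate
    have hU₁le : U₀ + V' ≤ S' := (le_tsub_iff_left hU₀le).mp hV'le
    have hU₁sum : (U₀ + V').sum = (Multiset.card (U₀ + V')) • g := by
      rw [Multiset.sum_add, hU₀sum, hV'sum, Multiset.card_add, add_nsmul]
    have hU₁card : Multiset.card (U₀ + V') ≤ n := by
      rw [Multiset.card_add]
      omega
    have hU₁C : U₀ + V' ∈ C := (hmemC _).mpr ⟨hU₁le, hU₁sum, hU₁card⟩
    have := hU₀max _ hU₁C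
    rw [Multiset.card_add] at this
    omega
end

section
/- Let m be an integer with m ≥ 2 and let T be a sequence over C_m ⊕ C_m of length 4 such that T^{m−1} (the sequence of length 4m − 4 in which each element of T is repeated m − 1 times as often) has no zero-sum subsequence of length m. Then for each f in the support of T, the sequence (f^{−1}T)^{m−1} (the sequence T with one occurrence of f removed, repeated m − 1 times) has no zero-sum subsequence of length 2m. -/
/-- If `T` is a sequence of length 4 over `C_m ⊕ C_m` such that `T^{m-1}`
has no zero-sum subsequence of length `m`, then for each `f` in the support of `T`, the
sequence `(f⁻¹T)^{m-1}` has no zero-sum subsequence of length `2m`. -/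
theorem stmt_19 (m : ℕ) (hm : 2 ≤ m) (T : Multiset (ZMod m × ZMod m))
    (hT : T.card = 4)
    (hnozs : ¬ ∃ U ≤ (m - 1) • T, U.sum = 0 ∧ Multiset.card U = m) :
    ∀ f ∈ T, ¬ ∃ U ≤ (m - 1) • (T.erase f), U.sum = 0 ∧ Multiset.card U = 2 * m := by
  intro f hf
  rintro ⟨U, hUle, hUsum, hUcard⟩
  set E := T.erase f with hEdef
  have hEcard : Multiset.card E = 3 := by
    rw [hEdef, Multiset.card_erase_of_mem hf, hT]
    rfl
  have hm' : m - 1 + 1 = m := by omega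
  have hmE : m • E = (m - 1) • E + E := by
    have h := succ_nsmul E (m - 1)
    rw [hm'] at h
    exact h
  have hUle' : U ≤ m • E := hUle.trans (by rw [hmE]; exact Multiset.le_add_right _ _)
  -- key pigeonhole claim: each element occurs in U at least as often as in E
  have hkey : ∀ g : ZMod m × ZMod m, E.count g ≤ U.count g := by
    intro g
    by_contra hlt
    push_neg at hlt
    have he1 : 1 ≤ E.count g := by omega
    have he3 : E.count g ≤ 3 := hEcard ▸ Multiset.count_le_card g E
    -- count of elements ≠ g in U bounded by those in (m-1)•E
    have h1 : U.filter (¬ g = ·) ≤ ((m - 1) • E).filter (¬ g = ·) :=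
      Multiset.filter_le_filter _ hUle
    have h2 := Multiset.card_le_card h1
    have hsplit : ∀ s : Multiset (ZMod m × ZMod m),
        Multiset.card s = s.count g + Multiset.card (s.filter (¬ g = ·)) := by
      intro s
      conv_lhs => rw [← Multiset.filter_add_not (g = ·) s]
      rw [Multiset.card_add, Multiset.count_eq_card_filter_eq]
    have hU2 := hsplit U
    have hE2 := hsplit ((m - 1) • E)
    have hcsm : ((m - 1) • E).count g = (m - 1) * E.count g := Multiset.count_nsmul _ _ _
    have hcardsm : Multiset.card ((m - 1) • E) = (m - 1) * 3 := by
      rw [Multiset.card_nsmul, hEcard]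
    -- assemble arithmetic
    have : 2 * m ≤ (E.count g - 1) + ((m - 1) * 3 - (m - 1) * E.count g) := by
      have := hU2
      omega
    interval_cases h : E.count g <;> omega
  have hEleU : E ≤ U := Multiset.le_iff_count.2 hkey
  -- the witness
  set W := m • E - U with hWdef
  have hWU : W + U = m • E := tsub_add_cancel_of_le hUle'
  have hWle : W ≤ (m - 1) • T := by
    rw [Multiset.le_iff_count]
    intro g
    have hc : W.count g = m * E.count g - U.count g := by
      rw [hWdef, Multiset.count_sub, Multiset.count_nsmul]
    have hET : E.count g ≤ T.count g := Multiset.count_le_of_le g (Multiset.erase_le f T)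
    have h1 : m * E.count g - U.count g ≤ (m - 1) * E.count g := by
      have h3 := hkey g
      have h4 := Nat.sub_one_mul m (E.count g)
      have h5 : E.count g ≤ m * E.count g := Nat.le_mul_of_pos_left _ (by omega)
      omega
    calc W.count g = m * E.count g - U.count g := hc
      _ ≤ (m - 1) * E.count g := h1
      _ ≤ (m - 1) * T.count g := Nat.mul_le_mul_left _ hET
      _ = ((m - 1) • T).count g := (Multiset.count_nsmul _ _ _).symm
  have hWcard : Multiset.card W = m := by
    have := congrArg Multiset.card hWU
    rw [Multiset.card_add, Multiset.card_nsmul, hEcard, hUcard] at this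
    omega
  have hsmul0 : ∀ x : ZMod m × ZMod m, m • x = 0 := by
    intro x
    ext <;> simp [nsmul_eq_mul, ZMod.natCast_self]
  have hWsum : W.sum = 0 := by
    have := congrArg Multiset.sum hWU
    rw [Multiset.sum_add, hUsum, add_zero, Multiset.sum_nsmul, hsmul0] at this
    exact this
  exact hnozs ⟨W, hWle, hWsum, hWcard⟩
end
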